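/- arXiv:1909.08099 — 5 statements merged into one kernel-verified Lean document; each statement's English description precedes it below -/
import Mathlib

section
/- The function x ↦ μ(x) := −min_{‖d‖≤1} max_{i∈{1,…,m}} ∇f_i(x)ᵀd is continuous on ℝⁿ. -/
/-! The quantity `min_{‖d‖ ≤ 1} max_i ⟪v_i, d⟫` is a 1-Lipschitz function of the tuple of vectors
`v = (v_i)`: moving each `v_i` by at most `δ` moves every `max_i ⟪v_i, d⟫` with `‖d‖ ≤ 1` by at most
`δ`, hence also their infimum. Composing with the continuous map `x ↦ (∇f_i(x))_i` gives the
continuity of `μ`. -/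

open scoped RealInnerProductSpace

/-- The multiobjective criticality measure
`μ(x) = - inf_{‖d‖ ≤ 1} max_{i} ⟪∇f_i(x), d⟫`. -/
noncomputable def mu {n m : ℕ} [NeZero m] (f : Fin m → EuclideanSpace ℝ (Fin n) → ℝ)
    (x : EuclideanSpace ℝ (Fin n)) : ℝ :=
  - sInf {y : ℝ | ∃ d : EuclideanSpace ℝ (Fin n), ‖d‖ ≤ 1 ∧
      Finset.univ.sup' Finset.univ_nonempty (fun i => ⟪gradient (f i) x, d⟫) = y}

theorem ContDiff.continuous_gradient {E : Type*} [NormedAddCommGroup E] [InnerProductSpace ℝ E]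
    [CompleteSpace E] {f : E → ℝ} (hf : ContDiff ℝ 1 f) : Continuous (gradient f) :=
  (InnerProductSpace.toDual ℝ E).symm.continuous.comp (hf.continuous_fderiv one_ne_zero)

section MinMaxInner

variable {ι E : Type*} [Fintype ι] [Nonempty ι] [NormedAddCommGroup E] [InnerProductSpace ℝ E]

noncomputable def maxInner (v : ι → E) (d : E) : ℝ :=
  Finset.univ.sup' Finset.univ_nonempty fun i => ⟪v i, d⟫

noncomputable def minMaxInner (v : ι → E) : ℝ :=
  sInf {y : ℝ | ∃ d : E, ‖d‖ ≤ 1 ∧ maxInner v d = y}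

theorem inner_le_maxInner (v : ι → E) (d : E) (i : ι) : ⟪v i, d⟫ ≤ maxInner v d :=
  Finset.le_sup' (fun i => ⟪v i, d⟫) (Finset.mem_univ i)

theorem maxInner_le_add_dist (v w : ι → E) {d : E} (hd : ‖d‖ ≤ 1) :
    maxInner v d ≤ maxInner w d + dist v w := by
  refine Finset.sup'_le _ _ fun i _ => ?_
  have hvw : ⟪v i - w i, d⟫ ≤ dist v w :=
    calc ⟪v i - w i, d⟫ ≤ ‖v i - w i‖ * ‖d‖ := real_inner_le_norm _ _
      _ ≤ dist v w * 1 :=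
        mul_le_mul (dist_eq_norm (v i) (w i) ▸ dist_le_pi_dist v w i) hd (norm_nonneg _)
          dist_nonneg
      _ = dist v w := mul_one _
  calc ⟪v i, d⟫ = ⟪w i, d⟫ + ⟪v i - w i, d⟫ := by rw [inner_sub_left]; ring
    _ ≤ maxInner w d + dist v w := add_le_add (inner_le_maxInner w d i) hvw

theorem bddBelow_maxInner_unitBall (v : ι → E) :
    BddBelow {y : ℝ | ∃ d : E, ‖d‖ ≤ 1 ∧ maxInner v d = y} := by
  obtain ⟨i⟩ := ‹Nonempty ι›
  refine ⟨-‖v i‖, ?_⟩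
  rintro y ⟨d, hd, rfl⟩
  calc -‖v i‖ ≤ -(‖v i‖ * ‖d‖) := by
        gcongr
        exact mul_le_of_le_one_right (norm_nonneg _) hd
    _ ≤ ⟪v i, d⟫ := neg_le_of_abs_le (abs_real_inner_le_norm _ _)
    _ ≤ maxInner v d := inner_le_maxInner v d i

theorem minMaxInner_le_add_dist (v w : ι → E) : minMaxInner v ≤ minMaxInner w + dist v w := by
  rw [← sub_le_iff_le_add]
  refine le_csInf ⟨_, 0, by simp, rfl⟩ ?_
  rintro y ⟨d, hd, rfl⟩
  rw [sub_le_iff_le_add]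
  exact (csInf_le (bddBelow_maxInner_unitBall v) ⟨d, hd, rfl⟩).trans (maxInner_le_add_dist v w hd)

theorem lipschitzWith_one_minMaxInner : LipschitzWith 1 (minMaxInner (ι := ι) (E := E)) :=
  LipschitzWith.of_le_add minMaxInner_le_add_dist

end MinMaxInner

theorem mu_eq_neg_minMaxInner {n m : ℕ} [NeZero m] (f : Fin m → EuclideanSpace ℝ (Fin n) → ℝ)
    (x : EuclideanSpace ℝ (Fin n)) : mu f x = -minMaxInner fun i => gradient (f i) x :=
  rfl

theorem stmt4 {n m : ℕ} [NeZero m] (f : Fin m → EuclideanSpace ℝ (Fin n) → ℝ)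
    (hf : ∀ i, ContDiff ℝ 1 (f i)) :
    Continuous (fun x => mu f x) := by
  have hgrad : Continuous fun x i => gradient (f i) x :=
    continuous_pi fun i => (hf i).continuous_gradient
  simp only [mu_eq_neg_minMaxInner]
  exact (lipschitzWith_one_minMaxInner.continuous.comp hgrad).neg
end

section
/- Suppose at a point x_k and stepsize α_k > 0, for every direction d in a finite set D_k of vectors with ‖d‖ ≤ 1 there exists an index i(d) ∈ {1,…,m} with f_{i(d)}(x_k + α_k d) ≥ f_{i(d)}(x_k) − ρ(α_k), where ρ : (0,∞) → (0,∞). Then μ_{D_k}(x_k) := −min_{d∈D_k} max_{i∈{1,…,m}} ∇f_i(x_k)ᵀd satisfies μ_{D_k}(x_k) ≤ (L_max/2)·α_k + ρ(α_k)/α_k. -/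
/-!
Descent lemma: if `∇g` is `L`-Lipschitz then `g (x + v) ≤ g x + ⟪∇g x, v⟫ + L/2 ‖v‖²`, because
`t ↦ g (x + t v) - t ⟪∇g x, v⟫ - L/2 t² ‖v‖²` has nonpositive derivative for `t ≥ 0`.
Applied with `v = α d` to the index `i(d)` of the unsuccessful step, it gives
`-⟪∇f_i x, d⟫ ≤ L_i α / 2 + ρ(α) / α ≤ L_max α / 2 + ρ(α) / α`, a lower bound on the maximum over
`i` for every `d ∈ D`, hence on the minimum over `D`.
-/

open scoped RealInnerProductSpace

section DescentLemma

variable {E : Type*} [NormedAddCommGroup E] [InnerProductSpace ℝ E] [CompleteSpace E]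
  {g : E → ℝ} {L : NNReal}

theorem Differentiable.hasDerivAt_comp_add_smul (hg : Differentiable ℝ g) (x v : E) (t : ℝ) :
    HasDerivAt (fun s : ℝ => g (x + s • v)) ⟪gradient g (x + t • v), v⟫ t := by
  have hline : HasDerivAt (fun s : ℝ => x + s • v) v t := by
    simpa using ((hasDerivAt_id t).smul_const v).const_add x
  exact (hg _).hasGradientAt.hasFDerivAt.comp_hasDerivAt t hline

theorem inner_gradient_add_smul_sub_le (hL : LipschitzWith L (gradient g)) (x v : E) {t : ℝ}
    (ht : 0 ≤ t) :
    ⟪gradient g (x + t • v), v⟫ - ⟪gradient g x, v⟫ ≤ L * t * ‖v‖ ^ 2 := by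
  calc ⟪gradient g (x + t • v), v⟫ - ⟪gradient g x, v⟫
      = ⟪gradient g (x + t • v) - gradient g x, v⟫ := (inner_sub_left _ _ _).symm
    _ ≤ ‖gradient g (x + t • v) - gradient g x‖ * ‖v‖ := real_inner_le_norm _ _
    _ ≤ L * ‖(x + t • v) - x‖ * ‖v‖ := by
        gcongr
        simpa only [dist_eq_norm] using hL.dist_le_mul (x + t • v) x
    _ = L * t * ‖v‖ ^ 2 := by
        rw [add_sub_cancel_left, norm_smul, Real.norm_of_nonneg ht]
        ring

theorem apply_add_le_of_lipschitzWith_gradient (hg : Differentiable ℝ g)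
    (hL : LipschitzWith L (gradient g)) (x v : E) :
    g (x + v) ≤ g x + ⟪gradient g x, v⟫ + L / 2 * ‖v‖ ^ 2 := by
  set φ : ℝ → ℝ := fun t => g (x + t • v) - t * ⟪gradient g x, v⟫ - L / 2 * t ^ 2 * ‖v‖ ^ 2
  have hφ' : ∀ t, HasDerivAt φ
      (⟪gradient g (x + t • v), v⟫ - ⟪gradient g x, v⟫ - L * t * ‖v‖ ^ 2) t := fun t => by
    refine (((hg.hasDerivAt_comp_add_smul x v t).sub
      ((hasDerivAt_id t).mul_const _)).sub
        (((hasDerivAt_pow 2 t).const_mul _).mul_const _)).congr_deriv ?_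
    push_cast
    ring
  have hanti : AntitoneOn φ (Set.Ici 0) := by
    refine antitoneOn_of_hasDerivWithinAt_nonpos (convex_Ici 0)
      (fun t _ => (hφ' t).continuousAt.continuousWithinAt) (fun t _ => (hφ' t).hasDerivWithinAt)
      fun t ht => ?_
    rw [interior_Ici] at ht
    linarith [inner_gradient_add_smul_sub_le hL x v ht.le]
  have := hanti Set.self_mem_Ici (Set.mem_Ici.2 zero_le_one) zero_le_one
  simp only [φ, zero_smul, one_smul, add_zero, zero_mul, sub_zero, one_mul, one_pow, mul_one,
    ne_eq, OfNat.ofNat_ne_zero, not_false_eq_true, zero_pow, mul_zero] at this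
  linarith

theorem neg_inner_gradient_le_of_sub_le (hg : Differentiable ℝ g)
    (hL : LipschitzWith L (gradient g)) {x d : E} (hd : ‖d‖ ≤ 1) {α r : ℝ} (hα : 0 < α)
    (h : g x - r ≤ g (x + α • d)) :
    -⟪gradient g x, d⟫ ≤ L / 2 * α + r / α := by
  have hdescent := apply_add_le_of_lipschitzWith_gradient hg hL x (α • d)
  rw [real_inner_smul_right, norm_smul, Real.norm_of_nonneg hα.le] at hdescent
  have hquad : (L : ℝ) / 2 * (α * ‖d‖) ^ 2 ≤ L / 2 * α ^ 2 := by
    gcongr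
    exact mul_le_of_le_one_right hα.le hd
  have hscaled : -⟪gradient g x, d⟫ * α ≤ (L / 2 * α + r / α) * α := by
    rw [add_mul, div_mul_cancel₀ _ hα.ne']
    linarith
  exact le_of_mul_le_mul_right hscaled hα

end DescentLemma

theorem stmt6_general {n m : ℕ} [NeZero m] (f : Fin m → EuclideanSpace ℝ (Fin n) → ℝ)
    (L : Fin m → NNReal)
    (hf : ∀ i, ContDiff ℝ 1 (f i))
    (hLip : ∀ i, LipschitzWith (L i) (gradient (f i)))
    (D : Finset (EuclideanSpace ℝ (Fin n))) (hD : D.Nonempty)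
    (hDnorm : ∀ d ∈ D, ‖d‖ ≤ 1)
    (x : EuclideanSpace ℝ (Fin n)) (α : ℝ) (hα : 0 < α)
    (ρ : ℝ → ℝ)
    (hunsucc : ∀ d ∈ D, ∃ i, f i (x + α • d) ≥ f i x - ρ α) :
    - D.inf' hD (fun d =>
        Finset.univ.sup' Finset.univ_nonempty (fun i => ⟪gradient (f i) x, d⟫)) ≤
      ((Finset.univ.sup' Finset.univ_nonempty L : NNReal) : ℝ) / 2 * α + ρ α / α := by
  rw [neg_le]
  refine Finset.le_inf' hD _ fun d hd => ?_
  obtain ⟨i, hi⟩ := hunsucc d hd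
  refine Finset.le_sup'_of_le _ (Finset.mem_univ i) (neg_le.1 ?_)
  have hLi : (L i : ℝ) ≤ (Finset.univ.sup' Finset.univ_nonempty L : NNReal) := by
    exact_mod_cast Finset.le_sup' L (Finset.mem_univ i)
  calc -⟪gradient (f i) x, d⟫
      ≤ L i / 2 * α + ρ α / α :=
        neg_inner_gradient_le_of_sub_le ((hf i).differentiable one_ne_zero) (hLip i)
          (hDnorm d hd) hα hi
    _ ≤ _ := by gcongr

theorem stmt6 {n m : ℕ} [NeZero m] (f : Fin m → EuclideanSpace ℝ (Fin n) → ℝ)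
    (L : Fin m → NNReal)
    (hf : ∀ i, ContDiff ℝ 1 (f i))
    (hLip : ∀ i, LipschitzWith (L i) (gradient (f i)))
    (D : Finset (EuclideanSpace ℝ (Fin n))) (hD : D.Nonempty)
    (hDnorm : ∀ d ∈ D, ‖d‖ ≤ 1)
    (x : EuclideanSpace ℝ (Fin n)) (α : ℝ) (hα : 0 < α)
    (ρ : ℝ → ℝ) (hρ : ∀ t > (0:ℝ), 0 < ρ t)
    (hunsucc : ∀ d ∈ D, ∃ i, f i (x + α • d) ≥ f i x - ρ α) :
    - D.inf' hD (fun d =>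
        Finset.univ.sup' Finset.univ_nonempty (fun i => ⟪gradient (f i) x, d⟫)) ≤
      ((Finset.univ.sup' Finset.univ_nonempty L : NNReal) : ℝ) / 2 * α + ρ α / α :=
  stmt6_general f L hf hLip D hD hDnorm x α hα ρ hunsucc
end

section
/- Let a sequence of stepsizes satisfy: for each k, either (successful iteration) f(x_{k+1}) ≤ f(x_k) − (c/2)α_k² and α_{k+1} ∈ [α_k, γα_k], or (unsuccessful) x_{k+1} = x_k and α_{k+1} ∈ [β₁α_k, β₂α_k], where 0 < β₁ ≤ β₂ < 1, γ ≥ 1, c > 0, and f is bounded below by F_min on the relevant set. Then ∑_{k=0}^∞ α_k² ≤ Ω := (γ²/(1−β₂²))·(γ^{−2}α_0² + (2/c)(f(x_0) − F_min)). -/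
/-!
On a successful iteration the new stepsize obeys `α_{k+1}² ≤ γ² α_k² ≤ γ² (2/c) (f(x_k) - f(x_{k+1}))`,
and on an unsuccessful one `α_{k+1}² ≤ β₂² α_k²` while `f(x_k)` does not change. Either way
`α_{k+1}² ≤ γ² (2/c) (f(x_k) - f(x_{k+1})) + β₂² α_k²`. Summing, the decrease of `f` telescopes
and is at most `f(x_0) - F_min`, so the partial sums `S_N` satisfy
`S_N - α_0² ≤ γ² (2/c) (f(x_0) - F_min) + β₂² S_N`.
-/

open Finset

section Recurrence

variable {s F : ℕ → ℝ} {q C Fmin : ℝ}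

theorem sum_range_succ_le_of_succ_le (hF : ∀ k, Fmin ≤ F k) (hC : 0 ≤ C)
    (hrec : ∀ k, s (k + 1) ≤ C * (F k - F (k + 1)) + q * s k) (N : ℕ) :
    ∑ k ∈ range (N + 1), s k ≤ s 0 + C * (F 0 - Fmin) + q * ∑ k ∈ range N, s k := by
  calc ∑ k ∈ range (N + 1), s k
      = s 0 + ∑ k ∈ range N, s (k + 1) := by rw [sum_range_succ', add_comm]
    _ ≤ s 0 + ∑ k ∈ range N, (C * (F k - F (k + 1)) + q * s k) := by
        gcongr with k; exact hrec k
    _ = s 0 + C * (F 0 - F N) + q * ∑ k ∈ range N, s k := by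
        rw [sum_add_distrib, ← mul_sum, ← mul_sum, sum_range_sub' F, add_assoc]
    _ ≤ s 0 + C * (F 0 - Fmin) + q * ∑ k ∈ range N, s k := by
        gcongr; exact hF N

theorem tsum_le_of_succ_le (hs : ∀ k, 0 ≤ s k) (hq : q < 1) (hF : ∀ k, Fmin ≤ F k)
    (hC : 0 ≤ C) (hrec : ∀ k, s (k + 1) ≤ C * (F k - F (k + 1)) + q * s k) :
    ∑' k, s k ≤ (s 0 + C * (F 0 - Fmin)) / (1 - q) := by
  refine Real.tsum_le_of_sum_range_le hs fun N => ?_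
  rw [le_div_iff₀ (sub_pos.2 hq)]
  have hmono : ∑ k ∈ range N, s k ≤ ∑ k ∈ range (N + 1), s k :=
    sum_le_sum_of_subset_of_nonneg (range_subset_range.2 N.le_succ) fun k _ _ => hs k
  linarith [sum_range_succ_le_of_succ_le hF hC hrec N]

end Recurrence

section Step

variable {a a' F F' c γ β₁ β₂ : ℝ}

theorem pos_of_step (hβ₁ : 0 < β₁) (ha : 0 < a)
    (h : (F' ≤ F - c / 2 * a ^ 2 ∧ a ≤ a' ∧ a' ≤ γ * a) ∨ (F' = F ∧ β₁ * a ≤ a' ∧ a' ≤ β₂ * a)) :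
    0 < a' := by
  rcases h with ⟨-, h, -⟩ | ⟨-, h, -⟩
  · exact ha.trans_le h
  · exact (mul_pos hβ₁ ha).trans_le h

theorem sq_le_of_step (hc : 0 < c)
    (h : (F' ≤ F - c / 2 * a ^ 2 ∧ a ≤ a' ∧ a' ≤ γ * a) ∨ (F' = F ∧ β₁ * a ≤ a' ∧ a' ≤ β₂ * a))
    (ha' : 0 ≤ a') :
    a' ^ 2 ≤ γ ^ 2 * (2 / c * (F - F')) + β₂ ^ 2 * a ^ 2 := by
  rcases h with ⟨hdec, -, hge⟩ | ⟨rfl, -, hge⟩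
  · have hsq : a ^ 2 ≤ 2 / c * (F - F') := by
      rw [div_mul_eq_mul_div, le_div_iff₀ hc]; linarith
    calc a' ^ 2 ≤ (γ * a) ^ 2 := pow_le_pow_left₀ ha' hge 2
      _ = γ ^ 2 * a ^ 2 := mul_pow γ a 2
      _ ≤ γ ^ 2 * (2 / c * (F - F')) := by gcongr
      _ ≤ γ ^ 2 * (2 / c * (F - F')) + β₂ ^ 2 * a ^ 2 := le_add_of_nonneg_right (by positivity)
  · calc a' ^ 2 ≤ (β₂ * a) ^ 2 := pow_le_pow_left₀ ha' hge 2
      _ = γ ^ 2 * (2 / c * (F' - F')) + β₂ ^ 2 * a ^ 2 := by ring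

end Step

theorem stmt9 {n : ℕ} (f : EuclideanSpace ℝ (Fin n) → ℝ)
    (x : ℕ → EuclideanSpace ℝ (Fin n)) (α : ℕ → ℝ)
    (c γ β₁ β₂ Fmin : ℝ)
    (hβ₁ : 0 < β₁) (hβ₁₂ : β₁ ≤ β₂) (hβ₂ : β₂ < 1) (hγ : 1 ≤ γ) (hc : 0 < c)
    (hα0 : 0 < α 0)
    (hbound : ∀ k, Fmin ≤ f (x k))
    (hstep : ∀ k,
      (f (x (k+1)) ≤ f (x k) - c / 2 * α k ^ 2 ∧
        α k ≤ α (k+1) ∧ α (k+1) ≤ γ * α k) ∨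
      (x (k+1) = x k ∧ β₁ * α k ≤ α (k+1) ∧ α (k+1) ≤ β₂ * α k)) :
    ∑' k, α k ^ 2 ≤
      γ ^ 2 / (1 - β₂ ^ 2) * (γ⁻¹ ^ 2 * α 0 ^ 2 + 2 / c * (f (x 0) - Fmin)) := by
  have hstep' k := (hstep k).imp_right (And.imp_left (congrArg f))
  have hpos : ∀ k, 0 < α k := Nat.rec hα0 fun k ih => pos_of_step hβ₁ ih (hstep' k)
  have hβ₂sq : β₂ ^ 2 < 1 := pow_lt_one₀ (hβ₁.le.trans hβ₁₂) hβ₂ two_ne_zero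
  have hsum := tsum_le_of_succ_le (s := fun k => α k ^ 2) (C := γ ^ 2 * (2 / c))
    (fun k => sq_nonneg (α k)) hβ₂sq hbound (by positivity) fun k => by
      rw [mul_assoc]; exact sq_le_of_step hc (hstep' k) (hpos (k + 1)).le
  have hγ0 : γ ≠ 0 := (zero_lt_one.trans_le hγ).ne'
  convert hsum using 1
  field_simp
end

section
/- Under the assumptions: (i) each f_i has L_i-Lipschitz gradient with L_max = max_i L_i; (ii) f := max_i f_i is bounded below by F_min along the iterates; (iii) |μ_{D_k} − μ_k| ≤ C₁·μ_{D_k} for all k; for ε ∈ (0,1), the first iteration index k_ε with μ_{k_ε+1} ≤ ε of the min-max direct-search algorithm satisfies k_ε ≤ (2/(cα_0²))(f(x_0) − F_min) + (Ω(L_max + c)²(C₁+1)²/(4β₁²))·ε^{−2}, where Ω = (γ²/(1−β₂²))(γ^{−2}α_0² + (2/c)(f(x_0) − F_min)). -/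
open scoped RealInnerProductSpace

/-- The approximate criticality measure over a finite set of poll directions. -/
noncomputable def muD {n m : ℕ} [NeZero m] (f : Fin m → EuclideanSpace ℝ (Fin n) → ℝ)
    (D : Finset (EuclideanSpace ℝ (Fin n))) (hD : D.Nonempty)
    (x : EuclideanSpace ℝ (Fin n)) : ℝ :=
  - D.inf' hD (fun d =>
      Finset.univ.sup' Finset.univ_nonempty (fun i => ⟪gradient (f i) x, d⟫))

/-- The min-max objective `f(x) = max_i f_i(x)`. -/
noncomputable def fmax {n m : ℕ} [NeZero m] (f : Fin m → EuclideanSpace ℝ (Fin n) → ℝ)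
    (x : EuclideanSpace ℝ (Fin n)) : ℝ :=
  Finset.univ.sup' Finset.univ_nonempty (fun i => f i x)

/-!
On a successful iteration `f` drops by more than `(c/2) α_k²`, so the squared stepsizes of the
successful iterations sum to at most `A = (2/c)(f(x₀) − F_min)`. The stepsize grows at most by `γ`
on success and shrinks at least by `β₂` on failure, so the squared stepsizes of the unsuccessful
iterations sum to at most `(α₀² + γ² A)/(1 − β₂²)`.

On an unsuccessful iteration the descent lemma for each `f_i` gives
`μ_{D_k} ≤ (L_max + c) α_k / 2`, hence `μ_k ≤ (C₁ + 1)(L_max + c) α_k / 2`. Before `k_ε` the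
iterate is not `ε`-critical, so every unsuccessful stepsize is at least
`r = 2ε / ((C₁ + 1)(L_max + c))` and every stepsize is at least `min(α₀, β₁ r)`. Dividing the two
sums by these lower bounds counts the iterations.
-/

open Set

theorem le_add_inner_gradient_add_of_lipschitzWith_gradient
    {E : Type*} [NormedAddCommGroup E] [InnerProductSpace ℝ E] [CompleteSpace E]
    {g : E → ℝ} {K : NNReal} (hg : Differentiable ℝ g) (hK : LipschitzWith K (gradient g))
    (x v : E) : g (x + v) ≤ g x + ⟪gradient g x, v⟫ + K / 2 * ‖v‖ ^ 2 := by
  set φ : ℝ → ℝ := fun t => g (x + t • v) - t * ⟪gradient g x, v⟫ - K / 2 * t ^ 2 * ‖v‖ ^ 2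
  have hφ : ∀ t, HasDerivAt φ
      (⟪gradient g (x + t • v), v⟫ - ⟪gradient g x, v⟫ - K * t * ‖v‖ ^ 2) t := by
    intro t
    have hline : HasDerivAt (fun s : ℝ => x + s • v) v t := by
      simpa using ((hasDerivAt_id t).smul_const v).const_add x
    have hcomp : HasDerivAt (fun s : ℝ => g (x + s • v)) ⟪gradient g (x + t • v), v⟫ t := by
      have hfd : HasFDerivAt g (InnerProductSpace.toDual ℝ E (gradient g (x + t • v)))
          (x + t • v) := hasGradientAt_iff_hasFDerivAt.1 (hg _).hasGradientAt
      exact hfd.comp_hasDerivAt t hline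
    refine ((hcomp.sub ((hasDerivAt_id t).mul_const ⟪gradient g x, v⟫)).sub
      (((hasDerivAt_pow 2 t).const_mul ((K : ℝ) / 2)).mul_const (‖v‖ ^ 2))).congr_deriv ?_
    simp only [Nat.cast_ofNat]
    ring
  have hφ' : ∀ t ∈ interior (Icc (0 : ℝ) 1), deriv φ t ≤ 0 := by
    intro t ht
    rw [interior_Icc] at ht
    have hlip : ‖gradient g (x + t • v) - gradient g x‖ ≤ K * (t * ‖v‖) := by
      simpa [norm_smul, abs_of_pos ht.1] using hK.norm_sub_le (x + t • v) x
    have hcs := real_inner_le_norm (gradient g (x + t • v) - gradient g x) v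
    rw [inner_sub_left] at hcs
    rw [(hφ t).deriv]
    nlinarith [norm_nonneg v]
  have hanti := antitoneOn_of_deriv_nonpos (convex_Icc 0 1)
    (fun t _ => (hφ t).continuousAt.continuousWithinAt)
    (fun t _ => (hφ t).differentiableAt.differentiableWithinAt) hφ'
    (left_mem_Icc.2 zero_le_one) (right_mem_Icc.2 zero_le_one) zero_le_one
  simp only [φ, zero_smul, add_zero, one_smul, zero_mul, one_mul, sub_zero, one_pow, mul_one,
    ne_eq, OfNat.ofNat_ne_zero, not_false_eq_true, zero_pow, mul_zero] at hanti
  linarith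

section MaxOfSmooth

variable {n m : ℕ} [NeZero m] {f : Fin m → EuclideanSpace ℝ (Fin n) → ℝ} {K : NNReal}

theorem fmax_add_smul_le (hf : ∀ i, Differentiable ℝ (f i))
    (hK : ∀ i, LipschitzWith K (gradient (f i))) (x d : EuclideanSpace ℝ (Fin n)) {a : ℝ}
    (ha : 0 ≤ a) :
    fmax f (x + a • d) ≤ fmax f x +
      a * Finset.univ.sup' Finset.univ_nonempty (fun i => ⟪gradient (f i) x, d⟫) +
      K / 2 * a ^ 2 * ‖d‖ ^ 2 := by
  refine Finset.sup'_le _ _ fun i _ => ?_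
  have hdesc := le_add_inner_gradient_add_of_lipschitzWith_gradient (hf i) (hK i) x (a • d)
  rw [inner_smul_right, norm_smul, Real.norm_of_nonneg ha, mul_pow, ← mul_assoc] at hdesc
  refine hdesc.trans ?_
  gcongr
  · exact Finset.le_sup' (fun i => f i x) (Finset.mem_univ i)
  · exact Finset.le_sup' (fun j => ⟪gradient (f j) x, d⟫) (Finset.mem_univ i)

theorem muD_le_of_forall_le_fmax_add_smul (hf : ∀ i, Differentiable ℝ (f i))
    (hK : ∀ i, LipschitzWith K (gradient (f i))) {D : Finset (EuclideanSpace ℝ (Fin n))}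
    (hD : D.Nonempty) (hDnorm : ∀ d ∈ D, ‖d‖ ≤ 1) {x : EuclideanSpace ℝ (Fin n)} {a c : ℝ}
    (ha : 0 < a) (hpoll : ∀ d ∈ D, fmax f x - c / 2 * a ^ 2 ≤ fmax f (x + a • d)) :
    muD f D hD x ≤ (K + c) / 2 * a := by
  obtain ⟨d, hd, hinf⟩ := D.exists_mem_eq_inf' hD
    (fun d => Finset.univ.sup' Finset.univ_nonempty (fun i => ⟪gradient (f i) x, d⟫))
  have hdesc := (hpoll d hd).trans (fmax_add_smul_le hf hK x d ha.le)
  have hd1 : (K : ℝ) / 2 * a ^ 2 * ‖d‖ ^ 2 ≤ K / 2 * a ^ 2 :=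
    mul_le_of_le_one_right (by positivity) (pow_le_one₀ (norm_nonneg d) (hDnorm d hd))
  rw [muD, hinf]
  refine le_of_mul_le_mul_left ?_ ha
  nlinarith

end MaxOfSmooth

section SteppedSequences

variable {s : ℕ → Prop} [DecidablePred s]

theorem sum_filter_range_le_sub {F u : ℕ → ℝ} (hsucc : ∀ k, s k → F (k + 1) ≤ F k - u k)
    (hfail : ∀ k, ¬ s k → F (k + 1) ≤ F k) (N : ℕ) :
    ∑ k ∈ (Finset.range N).filter s, u k ≤ F 0 - F N := by
  induction N with
  | zero => simp
  | succ N ih =>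
    rw [Finset.range_add_one, Finset.filter_insert]
    split_ifs with h
    · rw [Finset.sum_insert (by simp)]
      linarith [hsucc N h]
    · linarith [hfail N h]

theorem add_sum_filter_not_le {u : ℕ → ℝ} {p q : ℝ} (hsucc : ∀ k, s k → u (k + 1) ≤ p * u k)
    (hfail : ∀ k, ¬ s k → u (k + 1) ≤ q * u k) (N : ℕ) :
    u N + (1 - q) * ∑ k ∈ (Finset.range N).filter (¬ s ·), u k ≤
      u 0 + (p - 1) * ∑ k ∈ (Finset.range N).filter s, u k := by
  induction N with
  | zero => simp
  | succ N ih =>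
    rw [Finset.range_add_one, Finset.filter_insert, Finset.filter_insert]
    by_cases h : s N
    · rw [if_pos h, if_neg (not_not.2 h), Finset.sum_insert (by simp)]
      linarith [hsucc N h]
    · rw [if_neg h, if_pos h, Finset.sum_insert (by simp)]
      linarith [hfail N h]

variable {α : ℕ → ℝ} {β : ℝ}

theorem pos_of_le_succ_of_mul_le_succ (hβ : 0 < β) (h0 : 0 < α 0)
    (hsucc : ∀ k, s k → α k ≤ α (k + 1)) (hfail : ∀ k, ¬ s k → β * α k ≤ α (k + 1)) (k : ℕ) :
    0 < α k := by
  induction k with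
  | zero => exact h0
  | succ k ih =>
    by_cases h : s k
    · exact ih.trans_le (hsucc k h)
    · exact (mul_pos hβ ih).trans_le (hfail k h)

theorem min_le_of_le_succ_of_mul_le_succ (hβ : 0 ≤ β)
    (hsucc : ∀ k, s k → α k ≤ α (k + 1)) (hfail : ∀ k, ¬ s k → β * α k ≤ α (k + 1))
    {K : ℕ} {r : ℝ} (hr : ∀ k < K, ¬ s k → r ≤ α k) : ∀ k ≤ K, min (α 0) (β * r) ≤ α k := by
  intro k hk
  induction k with
  | zero => exact min_le_left _ _
  | succ k ih =>
    by_cases h : s k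
    · exact (ih (k.le_succ.trans hk)).trans (hsucc k h)
    · calc min (α 0) (β * r) ≤ β * r := min_le_right _ _
        _ ≤ β * α k := mul_le_mul_of_nonneg_left (hr k hk h) hβ
        _ ≤ α (k + 1) := hfail k h

end SteppedSequences

theorem add_le_of_mul_min_sq_le {a b A W α₀ β r : ℝ} (hα₀ : 0 < α₀) (hβ : 0 < β) (hr : 0 < r)
    (hA : 0 ≤ A) (ha : a * min α₀ (β * r) ^ 2 ≤ A) (hb : b * r ^ 2 ≤ W)
    (hAW : A + β ^ 2 * W ≤ W) :
    a + b ≤ A / α₀ ^ 2 + W / (β * r) ^ 2 := by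
  have ha' : a ≤ A / α₀ ^ 2 + A / (β * r) ^ 2 := by
    refine ((le_div_iff₀ (by positivity)).2 ha).trans ?_
    rcases min_choice α₀ (β * r) with h | h <;> rw [h] <;>
      linarith [div_nonneg hA (sq_nonneg α₀), div_nonneg hA (sq_nonneg (β * r))]
  have hb' : b ≤ W / r ^ 2 := (le_div_iff₀ (by positivity)).2 hb
  have hsum : A / (β * r) ^ 2 + W / r ^ 2 ≤ W / (β * r) ^ 2 := by
    rw [show W / r ^ 2 = β ^ 2 * W / (β * r) ^ 2 by field_simp, ← add_div]
    exact div_le_div_of_nonneg_right hAW (by positivity)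
  linarith

theorem card_le_of_le_stepsize {s : ℕ → Prop} [DecidablePred s] {F α : ℕ → ℝ}
    {c γ β₁ β₂ Fmin r : ℝ} (hc : 0 < c) (hγ : 1 ≤ γ) (hβ₁ : 0 < β₁) (hβ₁₂ : β₁ ≤ β₂)
    (hβ₂ : β₂ < 1) (hα0 : 0 < α 0) (hr : 0 < r)
    (hsucc : ∀ k, s k → F (k + 1) < F k - c / 2 * α k ^ 2 ∧ α k ≤ α (k + 1) ∧
      α (k + 1) ≤ γ * α k)
    (hfail : ∀ k, ¬ s k → F (k + 1) = F k ∧ β₁ * α k ≤ α (k + 1) ∧ α (k + 1) ≤ β₂ * α k)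
    {N : ℕ} (hbound : Fmin ≤ F N) (hstep : ∀ k < N, ¬ s k → r ≤ α k) :
    (N : ℝ) ≤ 2 / (c * α 0 ^ 2) * (F 0 - Fmin) +
      γ ^ 2 / (1 - β₂ ^ 2) * (γ⁻¹ ^ 2 * α 0 ^ 2 + 2 / c * (F 0 - Fmin)) / (β₁ * r) ^ 2 := by
  have hpos := pos_of_le_succ_of_mul_le_succ hβ₁ hα0 (fun k hk => (hsucc k hk).2.1)
    (fun k hk => (hfail k hk).2.1)
  set A := 2 / c * (F 0 - Fmin)
  set W := γ ^ 2 / (1 - β₂ ^ 2) * (γ⁻¹ ^ 2 * α 0 ^ 2 + A)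
  set S := (Finset.range N).filter s
  set U := (Finset.range N).filter (¬ s ·)
  have hβ₂sq : 0 < 1 - β₂ ^ 2 := by nlinarith
  have hW : W * (1 - β₂ ^ 2) = α 0 ^ 2 + γ ^ 2 * A := by
    simp only [W]
    field_simp
  have hSA : ∑ k ∈ S, α k ^ 2 ≤ A := by
    have hdec := sum_filter_range_le_sub (u := fun k => c / 2 * α k ^ 2)
      (fun k hk => (hsucc k hk).1.le) (fun k hk => (hfail k hk).1.le) N
    rw [← Finset.mul_sum] at hdec
    calc ∑ k ∈ S, α k ^ 2 = 2 / c * (c / 2 * ∑ k ∈ S, α k ^ 2) := by field_simp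
      _ ≤ A := mul_le_mul_of_nonneg_left (by linarith) (by positivity)
  have hA : 0 ≤ A := (Finset.sum_nonneg fun k _ => sq_nonneg (α k)).trans hSA
  have hUW : ∑ k ∈ U, α k ^ 2 ≤ W := by
    have hsq := add_sum_filter_not_le (u := fun k => α k ^ 2) (p := γ ^ 2) (q := β₂ ^ 2)
      (fun k hk => by rw [← mul_pow]; exact pow_le_pow_left₀ (hpos _).le (hsucc k hk).2.2 2)
      (fun k hk => by rw [← mul_pow]; exact pow_le_pow_left₀ (hpos _).le (hfail k hk).2.2 2) N
    have hγ2 : 0 ≤ γ ^ 2 - 1 := by nlinarith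
    rw [← mul_le_mul_iff_left₀ hβ₂sq, mul_comm, hW]
    nlinarith [sq_nonneg (α N), mul_le_mul_of_nonneg_left hSA hγ2]
  have hmin := min_le_of_le_succ_of_mul_le_succ hβ₁.le (fun k hk => (hsucc k hk).2.1)
    (fun k hk => (hfail k hk).2.1) hstep
  have hcardS : (S.card : ℝ) * min (α 0) (β₁ * r) ^ 2 ≤ A := by
    refine le_trans ?_ hSA
    rw [← nsmul_eq_mul]
    refine Finset.card_nsmul_le_sum _ _ _ fun k hk => ?_
    exact pow_le_pow_left₀ (lt_min hα0 (mul_pos hβ₁ hr)).le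
      (hmin k (Finset.mem_range.1 (Finset.mem_filter.1 hk).1).le) 2
  have hcardU : (U.card : ℝ) * r ^ 2 ≤ W := by
    refine le_trans ?_ hUW
    rw [← nsmul_eq_mul]
    refine Finset.card_nsmul_le_sum _ _ _ fun k hk => ?_
    obtain ⟨hkN, hks⟩ := Finset.mem_filter.1 hk
    exact pow_le_pow_left₀ hr.le (hstep k (Finset.mem_range.1 hkN) hks) 2
  have hAW : A + β₁ ^ 2 * W ≤ W := by
    have hW0 : 0 ≤ W := by positivity
    linarith [mul_le_mul_of_nonneg_right (pow_le_pow_left₀ hβ₁.le hβ₁₂ 2) hW0,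
      le_mul_of_one_le_left hA (one_le_pow₀ hγ : 1 ≤ γ ^ 2), sq_nonneg (α 0)]
  have hN : (N : ℝ) = S.card + U.card := by
    rw [← Nat.cast_add, Finset.card_filter_add_card_filter_not, Finset.card_range]
  rw [hN, show 2 / (c * α 0 ^ 2) * (F 0 - Fmin) = A / α 0 ^ 2 by simp only [A]; field_simp]
  exact add_le_of_mul_min_sq_le hα0 hβ₁ hr hA hcardS hcardU hAW

theorem stmt13_general {n m : ℕ} [NeZero m] (f : Fin m → EuclideanSpace ℝ (Fin n) → ℝ)
    (L : Fin m → NNReal)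
    (hf : ∀ i, ContDiff ℝ 1 (f i))
    (hLip : ∀ i, LipschitzWith (L i) (gradient (f i)))
    (x : ℕ → EuclideanSpace ℝ (Fin n)) (α : ℕ → ℝ)
    (D : ℕ → Finset (EuclideanSpace ℝ (Fin n)))
    (hDne : ∀ k, (D k).Nonempty)
    (hDnorm : ∀ k, ∀ d ∈ D k, ‖d‖ ≤ 1)
    (c γ β₁ β₂ C₁ Fmin ε : ℝ)
    (hβ₁ : 0 < β₁) (hβ₁₂ : β₁ ≤ β₂) (hβ₂ : β₂ < 1) (hγ : 1 ≤ γ) (hc : 0 < c)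
    (hC₁ : 0 < C₁) (hε : 0 < ε) (hα0 : 0 < α 0)
    (hbound : ∀ k, Fmin ≤ fmax f (x k))
    (hstep : ∀ k,
      (∃ d ∈ D k, x (k+1) = x k + α k • d ∧
          fmax f (x (k+1)) < fmax f (x k) - c / 2 * α k ^ 2 ∧
          α k ≤ α (k+1) ∧ α (k+1) ≤ γ * α k) ∨
      ((∀ d ∈ D k, fmax f (x k + α k • d) ≥ fmax f (x k) - c / 2 * α k ^ 2) ∧
          x (k+1) = x k ∧ β₁ * α k ≤ α (k+1) ∧ α (k+1) ≤ β₂ * α k))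
    (hC : ∀ k, |muD f (D k) (hDne k) (x k) - mu f (x k)| ≤
        C₁ * muD f (D k) (hDne k) (x k))
    (kε : ℕ)
    (hprev : ∀ j < kε, mu f (x (j + 1)) > ε) :
    (kε : ℝ) ≤ 2 / (c * α 0 ^ 2) * (fmax f (x 0) - Fmin) +
      (γ ^ 2 / (1 - β₂ ^ 2) * (γ⁻¹ ^ 2 * α 0 ^ 2 + 2 / c * (fmax f (x 0) - Fmin))) *
        (((Finset.univ.sup' Finset.univ_nonempty L : NNReal) : ℝ) + c) ^ 2 *
        (C₁ + 1) ^ 2 / (4 * β₁ ^ 2) / ε ^ 2 := by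
  classical
  set Lmax := Finset.univ.sup' Finset.univ_nonempty L
  have hLmax i : LipschitzWith Lmax (gradient (f i)) :=
    (hLip i).weaken (Finset.le_sup' L (Finset.mem_univ i))
  have hdiff i : Differentiable ℝ (f i) := (hf i).differentiable one_ne_zero
  set success : ℕ → Prop := fun k => ∃ d ∈ D k, x (k+1) = x k + α k • d ∧
    fmax f (x (k+1)) < fmax f (x k) - c / 2 * α k ^ 2 ∧ α k ≤ α (k+1) ∧ α (k+1) ≤ γ * α k
  have hfail k (hk : ¬ success k) := (hstep k).resolve_left hk
  have hpos := pos_of_le_succ_of_mul_le_succ hβ₁ hα0 (s := success)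
    (fun k ⟨_, _, _, _, h, _⟩ => h) (fun k hk => (hfail k hk).2.2.1)
  have hr : ∀ k < kε, ¬ success k → 2 * ε / ((C₁ + 1) * (Lmax + c)) ≤ α k := by
    intro k hk hks
    obtain ⟨hpoll, hx, -⟩ := hfail k hks
    have hμ : ε < mu f (x k) := hx ▸ hprev k hk
    have hμD := muD_le_of_forall_le_fmax_add_smul hdiff hLmax (hDne k) (hDnorm k) (hpos k) hpoll
    have hμμD : mu f (x k) ≤ (C₁ + 1) * muD f (D k) (hDne k) (x k) := by
      linarith [neg_abs_le (muD f (D k) (hDne k) (x k) - mu f (x k)), hC k]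
    rw [div_le_iff₀ (by positivity)]
    nlinarith
  have hcount := card_le_of_le_stepsize (F := fun k => fmax f (x k)) hc hγ hβ₁ hβ₁₂ hβ₂ hα0
    (by positivity) (fun k ⟨_, _, _, h⟩ => h)
    (fun k hk => ⟨congrArg (fmax f) (hfail k hk).2.1, (hfail k hk).2.2⟩) (hbound kε) hr
  refine hcount.trans_eq ?_
  field_simp
  ring

theorem stmt13 {n m : ℕ} [NeZero m] (f : Fin m → EuclideanSpace ℝ (Fin n) → ℝ)
    (L : Fin m → NNReal)
    (hf : ∀ i, ContDiff ℝ 1 (f i))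
    (hLip : ∀ i, LipschitzWith (L i) (gradient (f i)))
    (x : ℕ → EuclideanSpace ℝ (Fin n)) (α : ℕ → ℝ)
    (D : ℕ → Finset (EuclideanSpace ℝ (Fin n)))
    (hDne : ∀ k, (D k).Nonempty)
    (hDnorm : ∀ k, ∀ d ∈ D k, ‖d‖ ≤ 1)
    (c γ β₁ β₂ C₁ Fmin ε : ℝ)
    (hβ₁ : 0 < β₁) (hβ₁₂ : β₁ ≤ β₂) (hβ₂ : β₂ < 1) (hγ : 1 ≤ γ) (hc : 0 < c)
    (hC₁ : 0 < C₁) (hε : 0 < ε) (hε1 : ε < 1) (hα0 : 0 < α 0)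
    (hbound : ∀ k, Fmin ≤ fmax f (x k))
    (hstep : ∀ k,
      (∃ d ∈ D k, x (k+1) = x k + α k • d ∧
          fmax f (x (k+1)) < fmax f (x k) - c / 2 * α k ^ 2 ∧
          α k ≤ α (k+1) ∧ α (k+1) ≤ γ * α k) ∨
      ((∀ d ∈ D k, fmax f (x k + α k • d) ≥ fmax f (x k) - c / 2 * α k ^ 2) ∧
          x (k+1) = x k ∧ β₁ * α k ≤ α (k+1) ∧ α (k+1) ≤ β₂ * α k))
    (hC : ∀ k, |muD f (D k) (hDne k) (x k) - mu f (x k)| ≤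
        C₁ * muD f (D k) (hDne k) (x k))
    (kε : ℕ)
    (hfirst : mu f (x (kε + 1)) ≤ ε)
    (hprev : ∀ j < kε, mu f (x (j + 1)) > ε) :
    (kε : ℝ) ≤ 2 / (c * α 0 ^ 2) * (fmax f (x 0) - Fmin) +
      (γ ^ 2 / (1 - β₂ ^ 2) * (γ⁻¹ ^ 2 * α 0 ^ 2 + 2 / c * (fmax f (x 0) - Fmin))) *
        (((Finset.univ.sup' Finset.univ_nonempty L : NNReal) : ℝ) + c) ^ 2 *
        (C₁ + 1) ^ 2 / (4 * β₁ ^ 2) / ε ^ 2 :=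
  stmt13_general f L hf hLip x α D hDne hDnorm c γ β₁ β₂ C₁ Fmin ε hβ₁ hβ₁₂ hβ₂ hγ hc hC₁ hε hα0
    hbound hstep hC kε hprev
end

section
/- Consider stepsizes along a linked sequence satisfying α_{k+1} ≤ β₂·α_k at unsuccessful iterations and α_{k+1} ≤ γ·α_k at successful iterations, with 0 < β₂ < 1 ≤ γ. If the sequence contains |S| successful and |U| unsuccessful iterations starting from initial stepsize α₁, the final stepsize α_n satisfies α_n ≤ α₁·γ^{|S|}·β₂^{|U|}; consequently, if α_n ≥ β₁·L₂·ε^{1/min(p−1,1)} for a lower bound on stepsizes, then |U| ≤ −(log γ / log β₂)·|S| − log(α₁)/log β₂ + log(β₁·L₂·ε^{1/min(p−1,1)})/log β₂. -/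
open Finset

theorem le_mul_pow_card_filter_mul_pow_card_filter_not {R : Type*} [CommSemiring R]
    [PartialOrder R] [IsOrderedRing R] (α : ℕ → R) (N : ℕ) (succ : ℕ → Prop)
    [DecidablePred succ] {a b : R} (ha : 0 ≤ a) (hb : 0 ≤ b)
    (hstep : ∀ k < N, (succ k → α (k + 1) ≤ a * α k) ∧ (¬ succ k → α (k + 1) ≤ b * α k)) :
    α N ≤ α 0 * a ^ #{k ∈ range N | succ k} * b ^ #{k ∈ range N | ¬ succ k} := by
  induction N with
  | zero => simp
  | succ n ih =>
    have ih := ih fun k hk => hstep k (Nat.lt_succ_of_lt hk)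
    have hn_notMem {p : ℕ → Prop} [DecidablePred p] : n ∉ {k ∈ range n | p k} := by simp
    rw [range_add_one, filter_insert, filter_insert]
    by_cases hn : succ n
    · simp only [hn, not_true, if_true, if_false, card_insert_of_notMem hn_notMem]
      calc α (n + 1) ≤ a * α n := (hstep n n.lt_succ_self).1 hn
        _ ≤ a * (α 0 * a ^ #{k ∈ range n | succ k} * b ^ #{k ∈ range n | ¬ succ k}) :=
          mul_le_mul_of_nonneg_left ih ha
        _ = _ := by ring
    · simp only [hn, not_false_iff, if_true, if_false, card_insert_of_notMem hn_notMem]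
      calc α (n + 1) ≤ b * α n := (hstep n n.lt_succ_self).2 hn
        _ ≤ b * (α 0 * a ^ #{k ∈ range n | succ k} * b ^ #{k ∈ range n | ¬ succ k}) :=
          mul_le_mul_of_nonneg_left ih hb
        _ = _ := by ring

theorem Real.natCast_le_of_le_mul_pow_mul_pow {x a b c : ℝ} {s u : ℕ} (hc : 0 < c)
    (hb : 0 < b) (hb1 : b < 1) (hle : c ≤ x * a ^ s * b ^ u) :
    (u : ℝ) ≤ -(Real.log a / Real.log b) * s - Real.log x / Real.log b
      + Real.log c / Real.log b := by
  have hprod : x * a ^ s * b ^ u ≠ 0 := (hc.trans_le hle).ne'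
  have hxa : x * a ^ s ≠ 0 := left_ne_zero_of_mul hprod
  have hlog : Real.log c ≤ Real.log x + s * Real.log a + u * Real.log b := by
    calc Real.log c ≤ Real.log (x * a ^ s * b ^ u) := Real.log_le_log hc hle
      _ = _ := by
        rw [Real.log_mul hxa (right_ne_zero_of_mul hprod),
          Real.log_mul (left_ne_zero_of_mul hxa) (right_ne_zero_of_mul hxa),
          Real.log_pow, Real.log_pow]
  have hlogb : Real.log b < 0 := Real.log_neg hb hb1
  calc (u : ℝ) ≤ (Real.log c - Real.log x - s * Real.log a) / Real.log b := by
        rw [le_div_iff_of_neg hlogb]; linarith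
    _ = _ := by field_simp; ring

theorem stmt15_general (α : ℕ → ℝ) (N : ℕ) (succ : ℕ → Prop) [DecidablePred succ]
    (β₁ β₂ γ L₂ ε p : ℝ)
    (hβ₁ : 0 < β₁) (hβ₁₂ : β₁ ≤ β₂) (hβ₂ : β₂ < 1) (hγ : 1 ≤ γ)
    (hL₂ : 0 < L₂) (hε : 0 < ε)
    (hstep : ∀ k < N,
      (succ k → α (k + 1) ≤ γ * α k) ∧ (¬ succ k → α (k + 1) ≤ β₂ * α k)) :
    α N ≤ α 0 * γ ^ ((Finset.range N).filter succ).card *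
        β₂ ^ ((Finset.range N).filter (fun k => ¬ succ k)).card ∧
      (α N ≥ β₁ * L₂ * ε ^ (1 / min (p - 1) 1) →
        ((((Finset.range N).filter (fun k => ¬ succ k)).card : ℝ) ≤
          -(Real.log γ / Real.log β₂) * (((Finset.range N).filter succ).card : ℝ)
          - Real.log (α 0) / Real.log β₂
          + Real.log (β₁ * L₂ * ε ^ (1 / min (p - 1) 1)) / Real.log β₂)) := by
  have hβ₂0 : 0 < β₂ := hβ₁.trans_le hβ₁₂
  have hbound := le_mul_pow_card_filter_mul_pow_card_filter_not α N succ
    (zero_le_one.trans hγ) hβ₂0.le hstep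
  refine ⟨hbound, fun hge => ?_⟩
  have hc : 0 < β₁ * L₂ * ε ^ (1 / min (p - 1) 1) := by
    have := Real.rpow_pos_of_pos hε (1 / min (p - 1) 1)
    positivity
  exact Real.natCast_le_of_le_mul_pow_mul_pow hc hβ₂0 hβ₂ (hge.trans hbound)

theorem stmt15 (α : ℕ → ℝ) (N : ℕ) (succ : ℕ → Prop) [DecidablePred succ]
    (β₁ β₂ γ L₂ ε p : ℝ)
    (hβ₁ : 0 < β₁) (hβ₁₂ : β₁ ≤ β₂) (hβ₂ : β₂ < 1) (hγ : 1 ≤ γ)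
    (hp : 1 < p) (hL₂ : 0 < L₂) (hε : 0 < ε) (hε1 : ε < 1)
    (hα0 : 0 < α 0)
    (hstep : ∀ k < N,
      (succ k → α (k + 1) ≤ γ * α k) ∧ (¬ succ k → α (k + 1) ≤ β₂ * α k)) :
    α N ≤ α 0 * γ ^ ((Finset.range N).filter succ).card *
        β₂ ^ ((Finset.range N).filter (fun k => ¬ succ k)).card ∧
      (α N ≥ β₁ * L₂ * ε ^ (1 / min (p - 1) 1) →
        ((((Finset.range N).filter (fun k => ¬ succ k)).card : ℝ) ≤
          -(Real.log γ / Real.log β₂) * (((Finset.range N).filter succ).card : ℝ)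
          - Real.log (α 0) / Real.log β₂
          + Real.log (β₁ * L₂ * ε ^ (1 / min (p - 1) 1)) / Real.log β₂)) :=
  stmt15_general α N succ β₁ β₂ γ L₂ ε p hβ₁ hβ₁₂ hβ₂ hγ hL₂ hε hstep
end
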